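/- (Example 2.) Let μ1, μ2, μ3, μ4 ∈ ℝ and set ν1 = μ1−μ2+μ3−μ4, ν2 = μ1+μ2+μ3+μ4, ν3 = μ1−μ2−μ3+μ4, ν4 = μ1+μ2−μ3−μ4. Suppose u', v', w', z' : ℝ² → ℝ are smooth functions of (x',t') satisfying the linear auxiliary system w'_{x'} = u', w'_{t'} = μ1·u'_{x'} + μ2·v'_{x'}, z'_{x'} = v', z'_{t'} = μ3·u'_{x'} + μ4·v'_{x'}. Suppose the map Ψ : ℝ² → ℝ², Ψ(x',t') = ((−x' + w'(x',t') + z'(x',t'))/2, t'/2), is a bijection with smooth inverse, and define smooth w, z : ℝ² → ℝ by w(Ψ(x',t')) = (x' − w' + z')/2 and z(Ψ(x',t')) = (x' + w' − z')/2; set u = w_x, v = z_x and assume u + v vanishes nowhere. Then (u,v,w,z) satisfies the nonlinear second-generation potential system w_x = u, w_t = [(ν1·u·v + ν2·u + ν3·v + ν4)·u_x + (−ν1·u² + (ν2−ν3)·u + ν4)·v_x]/(u+v)³, z_x = v, z_t = [(ν1·v² + (ν2−ν3)·v − ν4)·u_x + (−ν1·u·v + ν3·u + ν2·v − ν4)·v_x]/(u+v)³;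 consequently u and v satisfy the nonlinear diffusion system u_t = ∂_x[((ν1 u v + ν2 u + ν3 v + ν4) u_x + (−ν1 u² + (ν2−ν3) u + ν4) v_x)/(u+v)³], v_t = ∂_x[((ν1 v² + (ν2−ν3) v − ν4) u_x + (−ν1 u v + ν3 u + ν2 v − ν4) v_x)/(u+v)³]. -/

import Mathlib

open Matrix

/-- Partial derivative with respect to the first variable `x`. -/
noncomputable def pdx (f : ℝ × ℝ → ℝ) : ℝ × ℝ → ℝ :=
  fun p => deriv (fun x => f (x, p.2)) p.1

/-- Partial derivative with respect to the second variable `t`. -/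
noncomputable def pdt (f : ℝ × ℝ → ℝ) : ℝ × ℝ → ℝ :=
  fun p => deriv (fun t => f (p.1, t)) p.2

lemma sliceX_hasDerivAt {f : ℝ × ℝ → ℝ} {p : ℝ × ℝ} (hf : DifferentiableAt ℝ f p) :
    HasDerivAt (fun x => f (x, p.2)) (fderiv ℝ f p (1, 0)) p.1 := by
  have hg : HasDerivAt (fun x : ℝ => (x, p.2)) ((1 : ℝ), (0 : ℝ)) p.1 :=
    HasDerivAt.prodMk (hasDerivAt_id p.1) (hasDerivAt_const p.1 p.2)
  exact hf.hasFDerivAt.comp_hasDerivAt p.1 hg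

lemma sliceT_hasDerivAt {f : ℝ × ℝ → ℝ} {p : ℝ × ℝ} (hf : DifferentiableAt ℝ f p) :
    HasDerivAt (fun t => f (p.1, t)) (fderiv ℝ f p (0, 1)) p.2 := by
  have hg : HasDerivAt (fun t : ℝ => (p.1, t)) ((0 : ℝ), (1 : ℝ)) p.2 :=
    HasDerivAt.prodMk (hasDerivAt_const p.2 p.1) (hasDerivAt_id p.2)
  exact hf.hasFDerivAt.comp_hasDerivAt p.2 hg

lemma pdx_eq {f : ℝ × ℝ → ℝ} {p : ℝ × ℝ} (hf : DifferentiableAt ℝ f p) :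
    pdx f p = fderiv ℝ f p (1, 0) :=
  (sliceX_hasDerivAt hf).deriv

lemma pdt_eq {f : ℝ × ℝ → ℝ} {p : ℝ × ℝ} (hf : DifferentiableAt ℝ f p) :
    pdt f p = fderiv ℝ f p (0, 1) :=
  (sliceT_hasDerivAt hf).deriv

lemma sliceX_pdx {f : ℝ × ℝ → ℝ} {p : ℝ × ℝ} (hf : DifferentiableAt ℝ f p) :
    HasDerivAt (fun x => f (x, p.2)) (pdx f p) p.1 := by
  rw [pdx_eq hf]; exact sliceX_hasDerivAt hf

lemma sliceT_pdt {f : ℝ × ℝ → ℝ} {p : ℝ × ℝ} (hf : DifferentiableAt ℝ f p) :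
    HasDerivAt (fun t => f (p.1, t)) (pdt f p) p.2 := by
  rw [pdt_eq hf]; exact sliceT_hasDerivAt hf

lemma clm_expand (L : ℝ × ℝ →L[ℝ] ℝ) (h k : ℝ) :
    L (h, k) = h * L (1, 0) + k * L (0, 1) := by
  have : (h, k) = h • ((1:ℝ), (0:ℝ)) + k • ((0:ℝ), (1:ℝ)) := by
    simp [Prod.ext_iff]
  rw [this, map_add, _root_.map_smul, _root_.map_smul, smul_eq_mul, smul_eq_mul]

lemma pdx_comp {F a b : ℝ × ℝ → ℝ} {p : ℝ × ℝ}
    (hF : DifferentiableAt ℝ F (a p, b p))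
    (ha : DifferentiableAt ℝ a p) (hb : DifferentiableAt ℝ b p) :
    pdx (fun q => F (a q, b q)) p
      = pdx F (a p, b p) * pdx a p + pdt F (a p, b p) * pdx b p := by
  have hg : HasDerivAt (fun x => (a (x, p.2), b (x, p.2)))
      (fderiv ℝ a p (1, 0), fderiv ℝ b p (1, 0)) p.1 :=
    HasDerivAt.prodMk (sliceX_hasDerivAt ha) (sliceX_hasDerivAt hb)
  have hc := hF.hasFDerivAt.comp_hasDerivAt p.1 hg
  have h1 : pdx (fun q => F (a q, b q)) p
      = fderiv ℝ F (a p, b p) (fderiv ℝ a p (1, 0), fderiv ℝ b p (1, 0)) := hc.deriv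
  rw [h1, clm_expand, pdx_eq hF, pdt_eq hF, pdx_eq ha, pdx_eq hb]
  ring

lemma pdt_comp {F a b : ℝ × ℝ → ℝ} {p : ℝ × ℝ}
    (hF : DifferentiableAt ℝ F (a p, b p))
    (ha : DifferentiableAt ℝ a p) (hb : DifferentiableAt ℝ b p) :
    pdt (fun q => F (a q, b q)) p
      = pdx F (a p, b p) * pdt a p + pdt F (a p, b p) * pdt b p := by
  have hg : HasDerivAt (fun t => (a (p.1, t), b (p.1, t)))
      (fderiv ℝ a p (0, 1), fderiv ℝ b p (0, 1)) p.2 :=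
    HasDerivAt.prodMk (sliceT_hasDerivAt ha) (sliceT_hasDerivAt hb)
  have hc := hF.hasFDerivAt.comp_hasDerivAt p.2 hg
  have h1 : pdt (fun q => F (a q, b q)) p
      = fderiv ℝ F (a p, b p) (fderiv ℝ a p (0, 1), fderiv ℝ b p (0, 1)) := hc.deriv
  rw [h1, clm_expand, pdx_eq hF, pdt_eq hF, pdt_eq ha, pdt_eq hb]
  ring

lemma pdx_contDiff {f : ℝ × ℝ → ℝ} (hf : ContDiff ℝ (⊤ : ℕ∞) f) : ContDiff ℝ (⊤ : ℕ∞) (pdx f) := by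
  have h : pdx f = fun p => fderiv ℝ f p (1, 0) :=
    funext fun p => pdx_eq ((hf.differentiable (by simp)).differentiableAt)
  rw [h]
  exact (hf.fderiv_right (by simp)).clm_apply contDiff_const

lemma pdx_pdt_comm {f : ℝ × ℝ → ℝ} (hf : ContDiff ℝ (⊤ : ℕ∞) f) (p : ℝ × ℝ) :
    pdt (pdx f) p = pdx (pdt f) p := by
  have hd : Differentiable ℝ f := hf.differentiable (by simp)
  have hfd : ContDiff ℝ (⊤ : ℕ∞) (fderiv ℝ f) := hf.fderiv_right (by simp)
  have hfdd : DifferentiableAt ℝ (fderiv ℝ f) p :=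
    (hfd.differentiable (by simp)).differentiableAt
  have hsymm : ∀ v w, fderiv ℝ (fderiv ℝ f) p v w = fderiv ℝ (fderiv ℝ f) p w v :=
    fun v w => second_derivative_symmetric (fun y => (hd y).hasFDerivAt)
      hfdd.hasFDerivAt v w
  have hx : pdx f = fun q => fderiv ℝ f q ((1:ℝ), (0:ℝ)) :=
    funext fun q => pdx_eq (hd q)
  have ht : pdt f = fun q => fderiv ℝ f q ((0:ℝ), (1:ℝ)) :=
    funext fun q => pdt_eq (hd q)
  have e1 : pdt (pdx f) p = fderiv ℝ (fderiv ℝ f) p (0, 1) (1, 0) := by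
    rw [hx, pdt_eq ((hfd.differentiable (by simp)).differentiableAt.clm_apply
      (differentiableAt_const _)),
      fderiv_clm_apply hfdd (differentiableAt_const _)]
    simp
  have e2 : pdx (pdt f) p = fderiv ℝ (fderiv ℝ f) p (1, 0) (0, 1) := by
    rw [ht, pdx_eq ((hfd.differentiable (by simp)).differentiableAt.clm_apply
      (differentiableAt_const _)),
      fderiv_clm_apply hfdd (differentiableAt_const _)]
    simp
  rw [e1, e2, hsymm]

set_option maxHeartbeats 4000000 in
/-- Example 2: every smooth solution of the linear auxiliary system with
coefficients `μ1,…,μ4`, transported by the inverse of the transformation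
`x' = w + z`, `t' = 2t`, `w' = x + z`, `z' = x + w` (i.e. `x = (−x'+w'+z')/2`,
`t = t'/2`, `w = (x'−w'+z')/2`, `z = (x'+w'−z')/2`), yields a solution of the nonlinear
second-generation potential system with the coefficient functions built from
`ν1 = μ1−μ2+μ3−μ4`, `ν2 = μ1+μ2+μ3+μ4`, `ν3 = μ1−μ2−μ3+μ4`, `ν4 = μ1+μ2−μ3−μ4`;
consequently `u, v` solve the corresponding nonlinear diffusion system. -/
theorem example2_linearizing_mapping
    (μ1 μ2 μ3 μ4 ν1 ν2 ν3 ν4 : ℝ)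
    (hν1 : ν1 = μ1 - μ2 + μ3 - μ4) (hν2 : ν2 = μ1 + μ2 + μ3 + μ4)
    (hν3 : ν3 = μ1 - μ2 - μ3 + μ4) (hν4 : ν4 = μ1 + μ2 - μ3 - μ4)
    (u' v' w' z' : ℝ × ℝ → ℝ)
    (hu' : ContDiff ℝ (⊤ : ℕ∞) u') (hv' : ContDiff ℝ (⊤ : ℕ∞) v')
    (hw' : ContDiff ℝ (⊤ : ℕ∞) w') (hz' : ContDiff ℝ (⊤ : ℕ∞) z')
    (heq1 : ∀ p : ℝ × ℝ, pdx w' p = u' p)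
    (heq2 : ∀ p : ℝ × ℝ, pdt w' p = μ1 * pdx u' p + μ2 * pdx v' p)
    (heq3 : ∀ p : ℝ × ℝ, pdx z' p = v' p)
    (heq4 : ∀ p : ℝ × ℝ, pdt z' p = μ3 * pdx u' p + μ4 * pdx v' p)
    (Ψ : ℝ × ℝ → ℝ × ℝ)
    (hΨ : Ψ = fun p => ((-p.1 + w' p + z' p) / 2, p.2 / 2))
    (Ψinv : ℝ × ℝ → ℝ × ℝ)
    (hl : Function.LeftInverse Ψinv Ψ) (hr : Function.RightInverse Ψinv Ψ)
    (hΨinv : ContDiff ℝ (⊤ : ℕ∞) Ψinv)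
    (w z : ℝ × ℝ → ℝ) (hws : ContDiff ℝ (⊤ : ℕ∞) w) (hzs : ContDiff ℝ (⊤ : ℕ∞) z)
    (hwdef : ∀ p : ℝ × ℝ, w (Ψ p) = (p.1 - w' p + z' p) / 2)
    (hzdef : ∀ p : ℝ × ℝ, z (Ψ p) = (p.1 + w' p - z' p) / 2)
    (u v : ℝ × ℝ → ℝ) (hu : u = pdx w) (hv : v = pdx z)
    (hden : ∀ p : ℝ × ℝ, u p + v p ≠ 0) :
    (∀ p : ℝ × ℝ, pdx w p = u p) ∧
    (∀ p : ℝ × ℝ, pdt w p =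
      ((ν1 * u p * v p + ν2 * u p + ν3 * v p + ν4) * pdx u p +
       (-(ν1 * (u p) ^ 2) + (ν2 - ν3) * u p + ν4) * pdx v p) / (u p + v p) ^ 3) ∧
    (∀ p : ℝ × ℝ, pdx z p = v p) ∧
    (∀ p : ℝ × ℝ, pdt z p =
      ((ν1 * (v p) ^ 2 + (ν2 - ν3) * v p - ν4) * pdx u p +
       (-(ν1 * u p * v p) + ν3 * u p + ν2 * v p - ν4) * pdx v p) / (u p + v p) ^ 3) ∧
    (∀ p : ℝ × ℝ, pdt u p =
      pdx (fun q => ((ν1 * u q * v q + ν2 * u q + ν3 * v q + ν4) * pdx u q +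
        (-(ν1 * (u q) ^ 2) + (ν2 - ν3) * u q + ν4) * pdx v q) / (u q + v q) ^ 3) p) ∧
    (∀ p : ℝ × ℝ, pdt v p =
      pdx (fun q => ((ν1 * (v q) ^ 2 + (ν2 - ν3) * v q - ν4) * pdx u q +
        (-(ν1 * u q * v q) + ν3 * u q + ν2 * v q - ν4) * pdx v q) / (u q + v q) ^ 3) p) := by
  subst hu hv hΨ
  simp only [] at hwdef hzdef hden hr ⊢
  -- differentiability facts
  have hw'd : Differentiable ℝ w' := hw'.differentiable (by simp)
  have hz'd : Differentiable ℝ z' := hz'.differentiable (by simp)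
  have hu'd : Differentiable ℝ u' := hu'.differentiable (by simp)
  have hv'd : Differentiable ℝ v' := hv'.differentiable (by simp)
  have hwd : Differentiable ℝ w := hws.differentiable (by simp)
  have hzd : Differentiable ℝ z := hzs.differentiable (by simp)
  have hud : Differentiable ℝ (pdx w) := (pdx_contDiff hws).differentiable (by simp)
  have hvd : Differentiable ℝ (pdx z) := (pdx_contDiff hzs).differentiable (by simp)
  have hAd : Differentiable ℝ (fun q : ℝ × ℝ => (-q.1 + w' q + z' q) / 2) :=
    by fun_prop
  have hBd : Differentiable ℝ (fun q : ℝ × ℝ => q.2 / 2) :=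
    by fun_prop
  -- partial derivatives of the transformation components
  have hAx : ∀ p : ℝ × ℝ, pdx (fun q : ℝ × ℝ => (-q.1 + w' q + z' q) / 2) p
      = (-1 + u' p + v' p) / 2 := by
    intro p
    have h : HasDerivAt (fun x : ℝ => (-x + w' (x, p.2) + z' (x, p.2)) / 2)
        ((-1 + pdx w' p + pdx z' p) / 2) p.1 :=
      (((hasDerivAt_id p.1).neg.add (sliceX_pdx (hw'd p))).add
        (sliceX_pdx (hz'd p))).div_const 2
    rw [← heq1 p, ← heq3 p]
    exact h.deriv
  have hAt : ∀ p : ℝ × ℝ, pdt (fun q : ℝ × ℝ => (-q.1 + w' q + z' q) / 2) p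
      = (0 + pdt w' p + pdt z' p) / 2 := by
    intro p
    have h : HasDerivAt (fun t : ℝ => (-p.1 + w' (p.1, t) + z' (p.1, t)) / 2)
        ((0 + pdt w' p + pdt z' p) / 2) p.2 :=
      (((hasDerivAt_const p.2 (-p.1)).add (sliceT_pdt (hw'd p))).add
        (sliceT_pdt (hz'd p))).div_const 2
    exact h.deriv
  have hBx : ∀ p : ℝ × ℝ, pdx (fun q : ℝ × ℝ => q.2 / 2) p = 0 := by
    intro p
    exact (hasDerivAt_const p.1 (p.2 / 2)).deriv
  have hBt : ∀ p : ℝ × ℝ, pdt (fun q : ℝ × ℝ => q.2 / 2) p = 1 / 2 := by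
    intro p
    exact ((hasDerivAt_id p.2).div_const 2).deriv
  -- the transported potentials as explicit functions
  have hWfun : (fun q : ℝ × ℝ => w ((-q.1 + w' q + z' q) / 2, q.2 / 2))
      = fun q : ℝ × ℝ => (q.1 - w' q + z' q) / 2 := funext hwdef
  have hZfun : (fun q : ℝ × ℝ => z ((-q.1 + w' q + z' q) / 2, q.2 / 2))
      = fun q : ℝ × ℝ => (q.1 + w' q - z' q) / 2 := funext hzdef
  have hRx : ∀ p : ℝ × ℝ, pdx (fun q : ℝ × ℝ => (q.1 - w' q + z' q) / 2) p
      = (1 - u' p + v' p) / 2 := by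
    intro p
    have h : HasDerivAt (fun x : ℝ => (x - w' (x, p.2) + z' (x, p.2)) / 2)
        ((1 - pdx w' p + pdx z' p) / 2) p.1 :=
      (((hasDerivAt_id p.1).sub (sliceX_pdx (hw'd p))).add
        (sliceX_pdx (hz'd p))).div_const 2
    rw [← heq1 p, ← heq3 p]
    exact h.deriv
  have hRx2 : ∀ p : ℝ × ℝ, pdx (fun q : ℝ × ℝ => (q.1 + w' q - z' q) / 2) p
      = (1 + u' p - v' p) / 2 := by
    intro p
    have h : HasDerivAt (fun x : ℝ => (x + w' (x, p.2) - z' (x, p.2)) / 2)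
        ((1 + pdx w' p - pdx z' p) / 2) p.1 :=
      (((hasDerivAt_id p.1).add (sliceX_pdx (hw'd p))).sub
        (sliceX_pdx (hz'd p))).div_const 2
    rw [← heq1 p, ← heq3 p]
    exact h.deriv
  have hRt : ∀ p : ℝ × ℝ, pdt (fun q : ℝ × ℝ => (q.1 - w' q + z' q) / 2) p
      = (0 - pdt w' p + pdt z' p) / 2 := by
    intro p
    have h : HasDerivAt (fun t : ℝ => (p.1 - w' (p.1, t) + z' (p.1, t)) / 2)
        ((0 - pdt w' p + pdt z' p) / 2) p.2 :=
      (((hasDerivAt_const p.2 p.1).sub (sliceT_pdt (hw'd p))).add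
        (sliceT_pdt (hz'd p))).div_const 2
    exact h.deriv
  have hRt2 : ∀ p : ℝ × ℝ, pdt (fun q : ℝ × ℝ => (q.1 + w' q - z' q) / 2) p
      = (0 + pdt w' p - pdt z' p) / 2 := by
    intro p
    have h : HasDerivAt (fun t : ℝ => (p.1 + w' (p.1, t) - z' (p.1, t)) / 2)
        ((0 + pdt w' p - pdt z' p) / 2) p.2 :=
      (((hasDerivAt_const p.2 p.1).add (sliceT_pdt (hw'd p))).sub
        (sliceT_pdt (hz'd p))).div_const 2
    exact h.deriv
  -- chain rule equations
  have E1 : ∀ p : ℝ × ℝ, pdx w ((-p.1 + w' p + z' p) / 2, p.2 / 2)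
      * ((-1 + u' p + v' p) / 2) = (1 - u' p + v' p) / 2 := by
    intro p
    have h := pdx_comp (F := w) (a := fun q : ℝ × ℝ => (-q.1 + w' q + z' q) / 2)
      (b := fun q : ℝ × ℝ => q.2 / 2) (p := p)
      (hwd _) (hAd p) (hBd p)
    rw [hWfun, hRx p, hAx p, hBx p] at h
    linarith [h]
  have E2 : ∀ p : ℝ × ℝ, pdx z ((-p.1 + w' p + z' p) / 2, p.2 / 2)
      * ((-1 + u' p + v' p) / 2) = (1 + u' p - v' p) / 2 := by
    intro p
    have h := pdx_comp (F := z) (a := fun q : ℝ × ℝ => (-q.1 + w' q + z' q) / 2)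
      (b := fun q : ℝ × ℝ => q.2 / 2) (p := p)
      (hzd _) (hAd p) (hBd p)
    rw [hZfun, hRx2 p, hAx p, hBx p] at h
    linarith [h]
  have E3 : ∀ p : ℝ × ℝ, pdx w ((-p.1 + w' p + z' p) / 2, p.2 / 2)
      * ((0 + pdt w' p + pdt z' p) / 2)
      + pdt w ((-p.1 + w' p + z' p) / 2, p.2 / 2) * (1 / 2)
      = (0 - pdt w' p + pdt z' p) / 2 := by
    intro p
    have h := pdt_comp (F := w) (a := fun q : ℝ × ℝ => (-q.1 + w' q + z' q) / 2)
      (b := fun q : ℝ × ℝ => q.2 / 2) (p := p)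
      (hwd _) (hAd p) (hBd p)
    rw [hWfun, hRt p, hAt p, hBt p] at h
    linarith [h]
  have E4 : ∀ p : ℝ × ℝ, pdx z ((-p.1 + w' p + z' p) / 2, p.2 / 2)
      * ((0 + pdt w' p + pdt z' p) / 2)
      + pdt z ((-p.1 + w' p + z' p) / 2, p.2 / 2) * (1 / 2)
      = (0 + pdt w' p - pdt z' p) / 2 := by
    intro p
    have h := pdt_comp (F := z) (a := fun q : ℝ × ℝ => (-q.1 + w' q + z' q) / 2)
      (b := fun q : ℝ × ℝ => q.2 / 2) (p := p)
      (hzd _) (hAd p) (hBd p)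
    rw [hZfun, hRt2 p, hAt p, hBt p] at h
    linarith [h]
  -- the denominator never vanishes
  have hD : ∀ p : ℝ × ℝ, (-1 + u' p + v' p) ≠ 0 := by
    intro p hc
    have h1 := E1 p
    have h2 := E2 p
    rw [hc] at h1 h2
    simp at h1 h2
    linarith
  -- explicit form of u and v at transformed points
  have hUfun : (fun q : ℝ × ℝ => pdx w ((-q.1 + w' q + z' q) / 2, q.2 / 2))
      = fun q : ℝ × ℝ => (1 - u' q + v' q) / (-1 + u' q + v' q) := by
    funext q
    rw [eq_div_iff (hD q)]
    linear_combination 2 * E1 q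
  have hVfun : (fun q : ℝ × ℝ => pdx z ((-q.1 + w' q + z' q) / 2, q.2 / 2))
      = fun q : ℝ × ℝ => (1 + u' q - v' q) / (-1 + u' q + v' q) := by
    funext q
    rw [eq_div_iff (hD q)]
    linear_combination 2 * E2 q
  -- x-derivatives of these explicit quotients
  have hQx : ∀ p : ℝ × ℝ, pdx (fun q : ℝ × ℝ => (1 - u' q + v' q) / (-1 + u' q + v' q)) p
      = ((0 - pdx u' p + pdx v' p) * (-1 + u' p + v' p)
          - (1 - u' p + v' p) * (0 + pdx u' p + pdx v' p)) / (-1 + u' p + v' p) ^ 2 := by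
    intro p
    have hnum : HasDerivAt (fun x : ℝ => 1 - u' (x, p.2) + v' (x, p.2))
        (0 - pdx u' p + pdx v' p) p.1 :=
      ((hasDerivAt_const p.1 (1 : ℝ)).sub (sliceX_pdx (hu'd p))).add (sliceX_pdx (hv'd p))
    have hde : HasDerivAt (fun x : ℝ => -1 + u' (x, p.2) + v' (x, p.2))
        (0 + pdx u' p + pdx v' p) p.1 :=
      ((hasDerivAt_const p.1 (-1 : ℝ)).add (sliceX_pdx (hu'd p))).add (sliceX_pdx (hv'd p))
    exact (hnum.div hde (hD p)).deriv
  have hQx2 : ∀ p : ℝ × ℝ, pdx (fun q : ℝ × ℝ => (1 + u' q - v' q) / (-1 + u' q + v' q)) p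
      = ((0 + pdx u' p - pdx v' p) * (-1 + u' p + v' p)
          - (1 + u' p - v' p) * (0 + pdx u' p + pdx v' p)) / (-1 + u' p + v' p) ^ 2 := by
    intro p
    have hnum : HasDerivAt (fun x : ℝ => 1 + u' (x, p.2) - v' (x, p.2))
        (0 + pdx u' p - pdx v' p) p.1 :=
      ((hasDerivAt_const p.1 (1 : ℝ)).add (sliceX_pdx (hu'd p))).sub (sliceX_pdx (hv'd p))
    have hde : HasDerivAt (fun x : ℝ => -1 + u' (x, p.2) + v' (x, p.2))
        (0 + pdx u' p + pdx v' p) p.1 :=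
      ((hasDerivAt_const p.1 (-1 : ℝ)).add (sliceX_pdx (hu'd p))).add (sliceX_pdx (hv'd p))
    exact (hnum.div hde (hD p)).deriv
  -- chain rule for u_x and v_x
  have E7 : ∀ p : ℝ × ℝ, pdx (pdx w) ((-p.1 + w' p + z' p) / 2, p.2 / 2)
      * ((-1 + u' p + v' p) / 2)
      = ((0 - pdx u' p + pdx v' p) * (-1 + u' p + v' p)
          - (1 - u' p + v' p) * (0 + pdx u' p + pdx v' p)) / (-1 + u' p + v' p) ^ 2 := by
    intro p
    have h := pdx_comp (F := pdx w) (a := fun q : ℝ × ℝ => (-q.1 + w' q + z' q) / 2)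
      (b := fun q : ℝ × ℝ => q.2 / 2) (p := p)
      (hud _) (hAd p) (hBd p)
    rw [hUfun, hQx p, hAx p, hBx p] at h
    linarith [h]
  have E8 : ∀ p : ℝ × ℝ, pdx (pdx z) ((-p.1 + w' p + z' p) / 2, p.2 / 2)
      * ((-1 + u' p + v' p) / 2)
      = ((0 + pdx u' p - pdx v' p) * (-1 + u' p + v' p)
          - (1 + u' p - v' p) * (0 + pdx u' p + pdx v' p)) / (-1 + u' p + v' p) ^ 2 := by
    intro p
    have h := pdx_comp (F := pdx z) (a := fun q : ℝ × ℝ => (-q.1 + w' q + z' q) / 2)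
      (b := fun q : ℝ × ℝ => q.2 / 2) (p := p)
      (hvd _) (hAd p) (hBd p)
    rw [hVfun, hQx2 p, hAx p, hBx p] at h
    linarith [h]
  -- the two key pointwise identities
  have T2 : ∀ P : ℝ × ℝ, pdt w P =
      ((ν1 * pdx w P * pdx z P + ν2 * pdx w P + ν3 * pdx z P + ν4) * pdx (pdx w) P +
       (-(ν1 * (pdx w P) ^ 2) + (ν2 - ν3) * pdx w P + ν4) * pdx (pdx z) P)
        / (pdx w P + pdx z P) ^ 3 := by
    intro P
    have hP := hr P
    simp only [] at hP
    set p := Ψinv P with hp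
    rw [← hP]
    have hDp := hD p
    have huq := congrFun hUfun p
    have hvq := congrFun hVfun p
    have hwt : pdt w ((-p.1 + w' p + z' p) / 2, p.2 / 2)
        = (0 - pdt w' p + pdt z' p)
          - pdx w ((-p.1 + w' p + z' p) / 2, p.2 / 2) * (0 + pdt w' p + pdt z' p) := by
      linear_combination 2 * E3 p
    have hux : pdx (pdx w) ((-p.1 + w' p + z' p) / 2, p.2 / 2)
        = 2 * ((0 - pdx u' p + pdx v' p) * (-1 + u' p + v' p)
            - (1 - u' p + v' p) * (0 + pdx u' p + pdx v' p)) / (-1 + u' p + v' p) ^ 3 := by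
      rw [eq_div_iff (pow_ne_zero 3 hDp)]
      have h := E7 p
      rw [eq_div_iff (pow_ne_zero 2 hDp)] at h
      linear_combination 2 * h
    have hvx : pdx (pdx z) ((-p.1 + w' p + z' p) / 2, p.2 / 2)
        = 2 * ((0 + pdx u' p - pdx v' p) * (-1 + u' p + v' p)
            - (1 + u' p - v' p) * (0 + pdx u' p + pdx v' p)) / (-1 + u' p + v' p) ^ 3 := by
      rw [eq_div_iff (pow_ne_zero 3 hDp)]
      have h := E8 p
      rw [eq_div_iff (pow_ne_zero 2 hDp)] at h
      linear_combination 2 * h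
    rw [hwt, hux, hvx, huq, hvq, heq2 p, heq4 p, hν1, hν2, hν3, hν4]
    field_simp
    ring
  have T4 : ∀ P : ℝ × ℝ, pdt z P =
      ((ν1 * (pdx z P) ^ 2 + (ν2 - ν3) * pdx z P - ν4) * pdx (pdx w) P +
       (-(ν1 * pdx w P * pdx z P) + ν3 * pdx w P + ν2 * pdx z P - ν4) * pdx (pdx z) P)
        / (pdx w P + pdx z P) ^ 3 := by
    intro P
    have hP := hr P
    simp only [] at hP
    set p := Ψinv P with hp
    rw [← hP]
    have hDp := hD p
    have huq := congrFun hUfun p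
    have hvq := congrFun hVfun p
    have hzt : pdt z ((-p.1 + w' p + z' p) / 2, p.2 / 2)
        = (0 + pdt w' p - pdt z' p)
          - pdx z ((-p.1 + w' p + z' p) / 2, p.2 / 2) * (0 + pdt w' p + pdt z' p) := by
      linear_combination 2 * E4 p
    have hux : pdx (pdx w) ((-p.1 + w' p + z' p) / 2, p.2 / 2)
        = 2 * ((0 - pdx u' p + pdx v' p) * (-1 + u' p + v' p)
            - (1 - u' p + v' p) * (0 + pdx u' p + pdx v' p)) / (-1 + u' p + v' p) ^ 3 := by
      rw [eq_div_iff (pow_ne_zero 3 hDp)]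
      have h := E7 p
      rw [eq_div_iff (pow_ne_zero 2 hDp)] at h
      linear_combination 2 * h
    have hvx : pdx (pdx z) ((-p.1 + w' p + z' p) / 2, p.2 / 2)
        = 2 * ((0 + pdx u' p - pdx v' p) * (-1 + u' p + v' p)
            - (1 + u' p - v' p) * (0 + pdx u' p + pdx v' p)) / (-1 + u' p + v' p) ^ 3 := by
      rw [eq_div_iff (pow_ne_zero 3 hDp)]
      have h := E8 p
      rw [eq_div_iff (pow_ne_zero 2 hDp)] at h
      linear_combination 2 * h
    rw [hzt, hux, hvx, huq, hvq, heq2 p, heq4 p, hν1, hν2, hν3, hν4]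
    field_simp
    ring
  refine ⟨fun _ => trivial, T2, fun _ => trivial, T4, ?_, ?_⟩
  · intro p
    rw [pdx_pdt_comm hws p, show pdt w = (fun q : ℝ × ℝ =>
      ((ν1 * pdx w q * pdx z q + ν2 * pdx w q + ν3 * pdx z q + ν4) * pdx (pdx w) q +
       (-(ν1 * (pdx w q) ^ 2) + (ν2 - ν3) * pdx w q + ν4) * pdx (pdx z) q)
        / (pdx w q + pdx z q) ^ 3) from funext T2]
  · intro p
    rw [pdx_pdt_comm hzs p, show pdt z = (fun q : ℝ × ℝ =>
      ((ν1 * (pdx z q) ^ 2 + (ν2 - ν3) * pdx z q - ν4) * pdx (pdx w) q +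
       (-(ν1 * pdx w q * pdx z q) + ν3 * pdx w q + ν2 * pdx z q - ν4) * pdx (pdx z) q)
        / (pdx w q + pdx z q) ^ 3) from funext T4]
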